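/- (Denjoy's lemma) Let f ∈ Diff_0([0,1]) be such that log f' has total variation v(f) < ∞ on [0,1]. If J ⊆ [0,1] is a closed interval with f(J) ∩ J = ∅, then for every n ∈ ℕ and all x, y ∈ J one has e^{−v(f)} ≤ (fⁿ)'(x)/(fⁿ)'(y) ≤ e^{v(f)}. -/

import Mathlib

/-!
Since `f` is increasing and `f(J) ∩ J = ∅`, the whole interval `J` is moved to one side of
itself, so the intervals `J, f(J), …, fⁿ⁻¹(J)` are disjoint and appear along `[0,1]` in monotone
order. By the chain rule, `log (fⁿ)'(x) - log (fⁿ)'(y) = ∑ₖ (log f'(fᵏ x) - log f'(fᵏ y))`, and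
the `k`-th term is at most the oscillation of `log f'` on `fᵏ(J)`; these oscillations over
disjoint ordered intervals add up to at most the total variation `v(f)`.
-/

/-- `IsDiff0 f g` says that `f` is an orientation-preserving `C¹` diffeomorphism of the
interval `[0,1]` fixing the endpoints, with inverse `g`. -/
structure IsDiff0 (f g : ℝ → ℝ) : Prop where
  mapsTo : Set.MapsTo f (Set.Icc 0 1) (Set.Icc 0 1)
  mapsTo_inv : Set.MapsTo g (Set.Icc 0 1) (Set.Icc 0 1)
  left_inv : ∀ x ∈ Set.Icc (0:ℝ) 1, g (f x) = x
  right_inv : ∀ x ∈ Set.Icc (0:ℝ) 1, f (g x) = x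
  map_zero : f 0 = 0
  map_one : f 1 = 1
  contDiffOn : ContDiffOn ℝ 1 f (Set.Icc 0 1)
  contDiffOn_inv : ContDiffOn ℝ 1 g (Set.Icc 0 1)
  deriv_pos : ∀ x ∈ Set.Icc (0:ℝ) 1, 0 < derivWithin f (Set.Icc 0 1) x

/-- The growth sequence `Γ_n(f) = max (sup_x (fⁿ)'(x), sup_x (f⁻ⁿ)'(x))`, where `g = f⁻¹`. -/
noncomputable def Gamma (f g : ℝ → ℝ) (n : ℕ) : ℝ :=
  max (⨆ x : Set.Icc (0:ℝ) 1, derivWithin (f^[n]) (Set.Icc 0 1) (x : ℝ))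
      (⨆ x : Set.Icc (0:ℝ) 1, derivWithin (g^[n]) (Set.Icc 0 1) (x : ℝ))

open Set Finset

section Variation

variable {α E : Type*} [LinearOrder α] [PseudoEMetricSpace E]

-- The variation left over on `s ∩ [c n, ∞)` makes the induction go through.
theorem sum_edist_add_eVariationOn_Ici_le (φ : α → E) {s : Set α} {c d : ℕ → α}
    (hc : ∀ k, c k ∈ s) (hd : ∀ k, d k ∈ s) (hcd : ∀ k, c k ≤ d k)
    (hdc : ∀ k, d k ≤ c (k + 1)) (n : ℕ) :
    ∑ k ∈ range n, edist (φ (c k)) (φ (d k)) + eVariationOn φ (s ∩ Ici (c n))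
      ≤ eVariationOn φ s := by
  induction n with
  | zero => simpa using eVariationOn.mono φ Set.inter_subset_left
  | succ n ih =>
    have h_edist : edist (φ (c n)) (φ (d n)) ≤ eVariationOn φ (s ∩ Icc (c n) (d n)) :=
      eVariationOn.edist_le φ ⟨hc n, le_rfl, hcd n⟩ ⟨hd n, hcd n, le_rfl⟩
    have h_union : eVariationOn φ (s ∩ Icc (c n) (d n)) + eVariationOn φ (s ∩ Ici (c (n + 1)))
        ≤ eVariationOn φ (s ∩ Ici (c n)) := by
      refine (eVariationOn.add_le_union φ fun x hx y hy => ?_).trans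
        (eVariationOn.mono φ ?_)
      · exact hx.2.2.trans ((hdc n).trans hy.2)
      · rintro x (hx | hx)
        · exact ⟨hx.1, hx.2.1⟩
        · exact ⟨hx.1, (hcd n).trans ((hdc n).trans hx.2)⟩
    calc ∑ k ∈ range (n + 1), edist (φ (c k)) (φ (d k)) + eVariationOn φ (s ∩ Ici (c (n + 1)))
        ≤ ∑ k ∈ range n, edist (φ (c k)) (φ (d k)) + (eVariationOn φ (s ∩ Icc (c n) (d n))
            + eVariationOn φ (s ∩ Ici (c (n + 1)))) := by
          rw [sum_range_succ, add_assoc]; gcongr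
      _ ≤ _ := (add_le_add_right h_union _).trans ih

theorem sum_edist_le_eVariationOn (φ : α → E) {s : Set α} {c d : ℕ → α}
    (hc : ∀ k, c k ∈ s) (hd : ∀ k, d k ∈ s) (hcd : ∀ k, c k ≤ d k)
    (hdc : ∀ k, d k ≤ c (k + 1)) (n : ℕ) :
    ∑ k ∈ range n, edist (φ (c k)) (φ (d k)) ≤ eVariationOn φ s :=
  le_self_add.trans (sum_edist_add_eVariationOn_Ici_le φ hc hd hcd hdc n)

theorem MonotoneOn.iterate {f : α → α} {s : Set α} (hf : MonotoneOn f s) (hfs : MapsTo f s s)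
    (n : ℕ) : MonotoneOn f^[n] s := by
  induction n with
  | zero => exact monotoneOn_id
  | succ n ih => exact ih.comp hf hfs

theorem MonotoneOn.sum_edist_iterate_le_eVariationOn_of_le_apply {f : α → α} {s : Set α}
    (hf : MonotoneOn f s) (hfs : MapsTo f s s) (φ : α → E) {p q : α} (hp : p ∈ s) (hq : q ∈ s)
    (hpq : p ≤ q) (hqf : q ≤ f p) (n : ℕ) :
    ∑ k ∈ range n, edist (φ (f^[k] p)) (φ (f^[k] q)) ≤ eVariationOn φ s := by
  refine sum_edist_le_eVariationOn φ (fun k => hfs.iterate k hp) (fun k => hfs.iterate k hq)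
    (fun k => (hf.iterate hfs k) hp hq hpq) (fun k => ?_) n
  rw [Function.iterate_succ_apply]
  exact (hf.iterate hfs k) hq (hfs hp) hqf

-- In the order dual the iterated intervals `[fᵏ q, fᵏ p]` move in increasing order.
theorem MonotoneOn.sum_edist_iterate_le_eVariationOn_of_apply_le {f : α → α} {s : Set α}
    (hf : MonotoneOn f s) (hfs : MapsTo f s s) (φ : α → E) {p q : α} (hp : p ∈ s) (hq : q ∈ s)
    (hpq : p ≤ q) (hfq : f q ≤ p) (n : ℕ) :
    ∑ k ∈ range n, edist (φ (f^[k] p)) (φ (f^[k] q)) ≤ eVariationOn φ s := by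
  have h_dual := MonotoneOn.sum_edist_iterate_le_eVariationOn_of_le_apply (α := αᵒᵈ)
    (f := f) (s := OrderDual.ofDual ⁻¹' s) hf.dual hfs (φ ∘ OrderDual.ofDual) hq hp hpq hfq n
  rw [eVariationOn.comp_ofDual] at h_dual
  exact (sum_congr rfl fun k _ => edist_comm _ _).trans_le h_dual

end Variation

section Wandering

variable {α : Type*} [ConditionallyCompleteLinearOrder α] [TopologicalSpace α] [OrderTopology α]
  [DenselyOrdered α]

theorem lt_apply_left_or_apply_right_lt_of_disjoint_image_Icc {f : α → α} {a b : α}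
    (hab : a ≤ b) (hf : ContinuousOn f (Icc a b)) (hdisj : Disjoint (f '' Icc a b) (Icc a b)) :
    b < f a ∨ f b < a := by
  have h_not_mem : ∀ t ∈ Icc a b, f t ∉ Icc a b := fun t ht =>
    disjoint_left.1 hdisj (mem_image_of_mem f ht)
  -- otherwise `f a < a` and `b < f b`, so `f` has a fixed point in `[a, b]`
  by_contra! h
  obtain ⟨t, ht, hft⟩ := isPreconnected_Icc.intermediate_value₂ (left_mem_Icc.2 hab)
    (right_mem_Icc.2 hab) hf continuousOn_id
    (le_of_not_ge fun ha => h_not_mem a (left_mem_Icc.2 hab) ⟨ha, h.1⟩)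
    (le_of_not_ge fun hb => h_not_mem b (right_mem_Icc.2 hab) ⟨h.2, hb⟩)
  exact h_not_mem t ht (hft ▸ ht)

variable {E : Type*} [PseudoEMetricSpace E]

theorem sum_edist_iterate_le_eVariationOn_of_disjoint_image_Icc {f : α → α} {s : Set α}
    {a b x y : α} (hf : MonotoneOn f s) (hfs : MapsTo f s s) (hcont : ContinuousOn f (Icc a b))
    (hJ : Icc a b ⊆ s) (hdisj : Disjoint (f '' Icc a b) (Icc a b)) (φ : α → E)
    (hx : x ∈ Icc a b) (hy : y ∈ Icc a b) (n : ℕ) :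
    ∑ k ∈ range n, edist (φ (f^[k] x)) (φ (f^[k] y)) ≤ eVariationOn φ s := by
  wlog hxy : x ≤ y generalizing x y
  · exact (sum_congr rfl fun k _ => edist_comm _ _).trans_le (this hy hx (le_of_not_ge hxy))
  have hab : a ≤ b := hx.1.trans hx.2
  have ha : a ∈ s := hJ (left_mem_Icc.2 hab)
  have hb : b ∈ s := hJ (right_mem_Icc.2 hab)
  rcases lt_apply_left_or_apply_right_lt_of_disjoint_image_Icc hab hcont hdisj with h | h
  · exact hf.sum_edist_iterate_le_eVariationOn_of_le_apply hfs φ (hJ hx) (hJ hy) hxy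
      (hy.2.trans (h.le.trans (hf ha (hJ hx) hx.1))) n
  · exact hf.sum_edist_iterate_le_eVariationOn_of_apply_le hfs φ (hJ hx) (hJ hy) hxy
      ((hf (hJ hy) hb hy.2).trans (h.le.trans hx.1)) n

end Wandering

theorem hasDerivWithinAt_iterate {𝕜 : Type*} [NontriviallyNormedField 𝕜] {f : 𝕜 → 𝕜}
    {s : Set 𝕜} (hf : DifferentiableOn 𝕜 f s) (hfs : MapsTo f s s) {x : 𝕜} (hx : x ∈ s)
    (n : ℕ) :
    HasDerivWithinAt f^[n] (∏ k ∈ range n, derivWithin f s (f^[k] x)) s x := by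
  induction n with
  | zero => simpa using hasDerivWithinAt_id x s
  | succ n ih =>
    rw [Function.iterate_succ', prod_range_succ, mul_comm]
    exact (hf _ (hfs.iterate n hx)).hasDerivWithinAt.comp x ih (hfs.iterate n)

namespace IsDiff0

variable {f g : ℝ → ℝ}

theorem monotoneOn (hf : IsDiff0 f g) : MonotoneOn f (Icc 0 1) := by
  refine (strictMonoOn_of_deriv_pos (convex_Icc 0 1) hf.contDiffOn.continuousOn
    fun x hx => ?_).monotoneOn
  rw [interior_Icc] at hx
  rw [← derivWithin_of_mem_nhds (Icc_mem_nhds hx.1 hx.2)]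
  exact hf.deriv_pos x (Ioo_subset_Icc_self hx)

theorem derivWithin_iterate (hf : IsDiff0 f g) (n : ℕ) {x : ℝ} (hx : x ∈ Icc (0 : ℝ) 1) :
    derivWithin f^[n] (Icc 0 1) x = ∏ k ∈ range n, derivWithin f (Icc 0 1) (f^[k] x) :=
  (hasDerivWithinAt_iterate (hf.contDiffOn.differentiableOn one_ne_zero) hf.mapsTo hx n
    ).derivWithin (uniqueDiffOn_Icc_zero_one x hx)

theorem derivWithin_iterate_pos (hf : IsDiff0 f g) (n : ℕ) {x : ℝ} (hx : x ∈ Icc (0 : ℝ) 1) :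
    0 < derivWithin f^[n] (Icc 0 1) x := by
  rw [hf.derivWithin_iterate n hx]
  exact prod_pos fun k _ => hf.deriv_pos _ (hf.mapsTo.iterate k hx)

theorem log_derivWithin_iterate (hf : IsDiff0 f g) (n : ℕ) {x : ℝ} (hx : x ∈ Icc (0 : ℝ) 1) :
    Real.log (derivWithin f^[n] (Icc 0 1) x)
      = ∑ k ∈ range n, Real.log (derivWithin f (Icc 0 1) (f^[k] x)) := by
  rw [hf.derivWithin_iterate n hx]
  exact Real.log_prod fun k _ => (hf.deriv_pos _ (hf.mapsTo.iterate k hx)).ne'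

end IsDiff0

theorem denjoy_lemma_general (f g : ℝ → ℝ) (hf : IsDiff0 f g) (v : ℝ) (hv0 : 0 ≤ v)
    (hv : eVariationOn (fun x => Real.log (derivWithin f (Set.Icc 0 1) x)) (Set.Icc 0 1)
      = ENNReal.ofReal v)
    (a b : ℝ) (hJ : Set.Icc a b ⊆ Set.Icc 0 1)
    (hdisj : f '' Set.Icc a b ∩ Set.Icc a b = ∅) :
    ∀ n : ℕ, ∀ x ∈ Set.Icc a b, ∀ y ∈ Set.Icc a b,
      Real.exp (-v) ≤ derivWithin (f^[n]) (Set.Icc 0 1) x / derivWithin (f^[n]) (Set.Icc 0 1) y ∧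
      derivWithin (f^[n]) (Set.Icc 0 1) x / derivWithin (f^[n]) (Set.Icc 0 1) y ≤ Real.exp v := by
  intro n x hx y hy
  set φ : ℝ → ℝ := fun t => Real.log (derivWithin f (Icc 0 1) t)
  have h_sum : ∑ k ∈ range n, |φ (f^[k] x) - φ (f^[k] y)| ≤ v := by
    rw [← ENNReal.ofReal_le_ofReal_iff hv0, ← hv,
      ENNReal.ofReal_sum_of_nonneg fun _ _ => abs_nonneg _]
    simpa only [edist_dist, Real.dist_eq] using
      sum_edist_iterate_le_eVariationOn_of_disjoint_image_Icc hf.monotoneOn hf.mapsTo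
        (hf.contDiffOn.continuousOn.mono hJ) hJ (disjoint_iff_inter_eq_empty.2 hdisj) φ hx hy n
  have hx_pos := hf.derivWithin_iterate_pos n (hJ hx)
  have hy_pos := hf.derivWithin_iterate_pos n (hJ hy)
  have h_log : |Real.log (derivWithin f^[n] (Icc 0 1) x / derivWithin f^[n] (Icc 0 1) y)| ≤ v := by
    rw [Real.log_div hx_pos.ne' hy_pos.ne', hf.log_derivWithin_iterate n (hJ hx),
      hf.log_derivWithin_iterate n (hJ hy), ← sum_sub_distrib]
    exact (abs_sum_le_sum_abs _ _).trans h_sum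
  have h_ratio_pos := div_pos hx_pos hy_pos
  rw [abs_le, Real.le_log_iff_exp_le h_ratio_pos, Real.log_le_iff_le_exp h_ratio_pos] at h_log
  exact h_log

/-- Denjoy's lemma: if `log f'` has total variation `v` on `[0,1]` and `J = [a,b] ⊆ [0,1]`
is a closed interval with `f(J) ∩ J = ∅`, then for every `n` and all `x, y ∈ J`,
`e^{-v} ≤ (fⁿ)'(x)/(fⁿ)'(y) ≤ e^{v}`. -/
theorem denjoy_lemma (f g : ℝ → ℝ) (hf : IsDiff0 f g) (v : ℝ) (hv0 : 0 ≤ v)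
    (hv : eVariationOn (fun x => Real.log (derivWithin f (Set.Icc 0 1) x)) (Set.Icc 0 1)
      = ENNReal.ofReal v)
    (a b : ℝ) (hab : a ≤ b) (hJ : Set.Icc a b ⊆ Set.Icc 0 1)
    (hdisj : f '' Set.Icc a b ∩ Set.Icc a b = ∅) :
    ∀ n : ℕ, ∀ x ∈ Set.Icc a b, ∀ y ∈ Set.Icc a b,
      Real.exp (-v) ≤ derivWithin (f^[n]) (Set.Icc 0 1) x / derivWithin (f^[n]) (Set.Icc 0 1) y ∧
      derivWithin (f^[n]) (Set.Icc 0 1) x / derivWithin (f^[n]) (Set.Icc 0 1) y ≤ Real.exp v :=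
  denjoy_lemma_general f g hf v hv0 hv a b hJ hdisj
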